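/- arXiv:0906.5477 — 4 statements merged into one kernel-verified Lean document; each statement's English description precedes it below -/
import Mathlib

section
/- Let Z(λ) = ∫_ℝ e^{−λx⁴/8} dν(x). For every λ ∈ ℂ with Re λ ≥ 0, Z(λ) = ∫_ℝ (1 + i·√λ·σ)^{−1/2} dν(σ), where both integrals converge absolutely and (·)^{−1/2} denotes the principal branch. (Intermediate-field representation of the zero-dimensional φ⁴ partition function.) -/
/-!
For real `μ`, the Gaussian characteristic function gives `e^{-μ²x⁴/8} = ∫ e^{-iμx²σ/2} dν(σ)`.
The integrand has modulus one, so Fubini applies, and the inner integral is the complex Gaussian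
integral `∫ e^{-iμσx²/2} dν(x) = (1 + iμσ)^{-1/2}`; this is the identity at `λ = μ²`.

For complex `μ` the exchange of integrals fails, so the identity is continued analytically in `μ`.
On the closed sector `|Im μ| ≤ Re μ`, which the principal square root maps `Re λ ≥ 0` onto, one has
`Re μ² ≥ 0` and `|1 + iμσ|² ≥ 1/2`: both integrands are bounded, and so are their `μ`-derivatives
up to integrable factors `x⁴` and `|σ|`. Hence both sides are holomorphic on the open sector and
continuous on its closure, and the identity theorem extends the real identity to the whole sector.
-/

open MeasureTheory

noncomputable def gaussianNu : Measure ℝ :=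
  MeasureTheory.volume.withDensity fun σ : ℝ =>
    ENNReal.ofReal ((Real.sqrt (2 * Real.pi))⁻¹ * Real.exp (-σ ^ 2 / 2))

open ProbabilityTheory Complex Set Filter Topology

theorem differentiableOn_integral_of_deriv_le {α 𝕜 E : Type*} [MeasurableSpace α]
    {μ : Measure α} [RCLike 𝕜] [NormedAddCommGroup E] [NormedSpace ℝ E] [NormedSpace 𝕜 E]
    {F F' : 𝕜 → α → E} {s : Set 𝕜} {bound : α → ℝ} (hs : IsOpen s)
    (hF_int : ∀ x ∈ s, Integrable (F x) μ) (hF'_meas : ∀ x ∈ s, AEStronglyMeasurable (F' x) μ)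
    (h_bound : ∀ᵐ a ∂μ, ∀ x ∈ s, ‖F' x a‖ ≤ bound a) (bound_integrable : Integrable bound μ)
    (h_diff : ∀ᵐ a ∂μ, ∀ x ∈ s, HasDerivAt (F · a) (F' x a) x) :
    DifferentiableOn 𝕜 (fun x => ∫ a, F x a ∂μ) s := fun x hx =>
  (hasDerivAt_integral_of_dominated_loc_of_deriv_le (hs.mem_nhds hx)
    (eventually_of_mem (hs.mem_nhds hx) fun y hy => (hF_int y hy).aestronglyMeasurable)
    (hF_int x hx) (hF'_meas x hx) h_bound bound_integrable
    h_diff).2.differentiableAt.differentiableWithinAt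

theorem gaussianNu_eq_gaussianReal : gaussianNu = gaussianReal 0 1 := by
  rw [gaussianReal_of_var_ne_zero _ one_ne_zero]
  unfold gaussianNu gaussianPDF gaussianPDFReal
  norm_num

section GaussianIntegrals

theorem inv_sqrt_two_pi_mul_cpow_one_div_two {w : ℂ} (hw : 0 < w.re) :
    ((√(2 * Real.pi))⁻¹ : ℝ) * ((Real.pi : ℂ) / (w / 2)) ^ (1 / 2 : ℂ) = w ^ (-(1 / 2) : ℂ) := by
  have hw0 : w ≠ 0 := by rintro rfl; simp at hw
  have harg : w.arg ≠ Real.pi := by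
    have := abs_arg_lt_pi_div_two_iff.mpr (Or.inl hw)
    intro h; rw [h, abs_of_pos Real.pi_pos] at this; linarith [Real.pi_pos]
  have h2pi : 0 < 2 * Real.pi := by positivity
  have hsplit : (Real.pi : ℂ) / (w / 2) = ((2 * Real.pi : ℝ) : ℂ) * w⁻¹ := by
    push_cast; field_simp
  rw [hsplit, cpow_def_of_ne_zero (mul_ne_zero (ofReal_ne_zero.2 h2pi.ne') (inv_ne_zero hw0)),
    cpow_def_of_ne_zero hw0, log_ofReal_mul h2pi (inv_ne_zero hw0), log_inv _ harg, add_mul,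
    exp_add, Real.sqrt_eq_rpow]
  have hsqrt : cexp (Real.log (2 * Real.pi) * (1 / 2)) = ((2 * Real.pi) ^ (1 / 2 : ℝ) : ℝ) := by
    rw [Real.rpow_def_of_pos h2pi]; push_cast; ring_nf
  rw [hsqrt, ← mul_assoc, ← ofReal_mul, inv_mul_cancel₀ (by positivity), ofReal_one, one_mul]
  ring_nf

theorem integral_cexp_neg_mul_sq_div_two_gaussianReal {c : ℂ} (hc : 0 < (1 + c).re) :
    ∫ x, cexp (-c * x ^ 2 / 2) ∂gaussianReal 0 1 = (1 + c) ^ (-(1 / 2) : ℂ) := by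
  have hb : 0 < ((1 + c) / 2).re := by simpa using hc
  rw [integral_gaussianReal_eq_integral_smul one_ne_zero]
  simp_rw [gaussianPDFReal, Complex.real_smul]
  push_cast
  simp_rw [mul_assoc, integral_const_mul, ← Complex.exp_add]
  have hexp (x : ℝ) : -((x : ℂ) - 0) ^ 2 / (2 * 1) + -c * x ^ 2 / 2 = -((1 + c) / 2) * x ^ 2 := by
    ring
  simp_rw [hexp, integral_gaussian_complex hb, mul_one, ← inv_sqrt_two_pi_mul_cpow_one_div_two hc]
  push_cast
  ring_nf

theorem cexp_neg_sq_div_two_eq_integral_gaussianReal (t : ℝ) :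
    cexp (-t ^ 2 / 2) = ∫ σ, cexp (t * σ * I) ∂gaussianReal 0 1 := by
  rw [← charFun_apply_real, charFun_gaussianReal]
  congr 1; push_cast; ring

end GaussianIntegrals

section Sector

theorem re_cpow_one_div_two_nonneg (z : ℂ) : 0 ≤ (z ^ (1 / 2 : ℂ)).re := by
  rcases eq_or_ne z 0 with rfl | hz
  · simp [zero_cpow]
  rw [cpow_def_of_ne_zero hz, exp_re]
  have him : (log z * (1 / 2)).im = z.arg / 2 := by simp [log_im]; ring
  rw [him]
  exact mul_nonneg (Real.exp_nonneg _) (Real.cos_nonneg_of_mem_Icc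
    ⟨by linarith [neg_pi_lt_arg z], by linarith [arg_le_pi z]⟩)

theorem cpow_one_div_two_sq (z : ℂ) : (z ^ (1 / 2 : ℂ)) ^ 2 = z := by
  rw [one_div]; exact cpow_ofNat_inv_pow z 2

theorem abs_im_le_re_iff {μ : ℂ} (hre : 0 ≤ μ.re) : |μ.im| ≤ μ.re ↔ 0 ≤ (μ ^ 2).re := by
  rw [sq, mul_re, ← sq, ← sq, sub_nonneg, sq_le_sq, abs_of_nonneg hre]

theorem re_sq_pos_of_abs_im_lt_re {μ : ℂ} (hμ : |μ.im| < μ.re) : 0 < (μ ^ 2).re := by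
  rwa [sq, mul_re, ← sq, ← sq, sub_pos, sq_lt_sq, abs_of_pos ((abs_nonneg _).trans_lt hμ)]

theorem isOpen_setOf_abs_im_lt_re : IsOpen {μ : ℂ | |μ.im| < μ.re} :=
  isOpen_lt (continuous_abs.comp continuous_im) continuous_re

theorem convex_setOf_abs_im_lt_re : Convex ℝ {μ : ℂ | |μ.im| < μ.re} := by
  intro x hx y hy a b ha hb hab
  simp only [mem_ofPred_eq, abs_lt, add_re, add_im, smul_re, smul_im, smul_eq_mul] at *
  rcases ha.eq_or_lt with rfl | ha
  · obtain rfl : b = 1 := by linarith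
    simpa using hy
  · constructor <;> nlinarith [mul_pos ha (sub_pos.2 hx.1), mul_pos ha (sub_pos.2 hx.2)]

theorem setOf_abs_im_le_re_subset_closure :
    {μ : ℂ | |μ.im| ≤ μ.re} ⊆ closure {μ : ℂ | |μ.im| < μ.re} := fun μ hμ =>
  Metric.mem_closure_iff.2 fun ε hε => ⟨μ + (ε / 2 : ℝ), by simp; linarith [hμ.out], by
    rw [dist_self_add_right, norm_real, Real.norm_of_nonneg (by positivity)]; linarith⟩

variable {μ : ℂ}

theorem half_le_normSq_one_add_I_mul (hμ : |μ.im| ≤ μ.re) (σ : ℝ) : 1 / 2 ≤ normSq (1 + I * μ * σ) := by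
  have h : μ.im ^ 2 ≤ μ.re ^ 2 := sq_le_sq.2 (by rwa [abs_of_nonneg ((abs_nonneg _).trans hμ)])
  simp only [normSq_apply, add_re, add_im, mul_re, mul_im, I_re, I_im, ofReal_re, ofReal_im,
    one_re, one_im]
  nlinarith [sq_nonneg (μ.im * σ - 1 / 2), sq_nonneg σ, mul_le_mul_of_nonneg_right h (sq_nonneg σ)]

theorem one_add_I_mul_mem_slitPlane (hμ : |μ.im| ≤ μ.re) (σ : ℝ) :
    1 + I * μ * σ ∈ slitPlane := by
  rw [mem_slitPlane_iff]
  by_cases him : μ.re * σ = 0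
  · left
    rcases mul_eq_zero.1 him with h | h
    · have : μ.im = 0 := abs_nonpos_iff.1 (h ▸ hμ)
      simp [this]
    · simp [h]
  · right; simpa using him

theorem norm_one_add_I_mul_cpow_le (hμ : |μ.im| ≤ μ.re) (σ : ℝ) {s : ℝ} (hs : -2 ≤ s)
    (hs0 : s ≤ 0) :
    ‖(1 + I * μ * σ) ^ (s : ℂ)‖ ≤ 4 := by
  have hhalf : 1 / 2 ≤ ‖1 + I * μ * σ‖ := by
    have := half_le_normSq_one_add_I_mul hμ σ
    rw [normSq_eq_norm_sq] at this
    nlinarith [norm_nonneg (1 + I * μ * σ)]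
  rw [norm_cpow_real]
  calc ‖1 + I * μ * σ‖ ^ s ≤ (1 / 2) ^ s := Real.rpow_le_rpow_of_nonpos (by norm_num) hhalf hs0
    _ = 2 ^ (-s) := by rw [one_div, Real.inv_rpow zero_le_two, Real.rpow_neg zero_le_two]
    _ ≤ 2 ^ (2 : ℝ) := Real.rpow_le_rpow_of_exponent_le one_le_two (by linarith)
    _ = 4 := by norm_num

end Sector

section PartitionFunction

noncomputable def phi4PartitionFunction (lam : ℂ) : ℂ :=
  ∫ x, cexp (-lam * x ^ 4 / 8) ∂gaussianReal 0 1

theorem norm_cexp_neg_mul_pow_four_le {lam : ℂ} (hlam : 0 ≤ lam.re) (x : ℝ) :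
    ‖cexp (-lam * x ^ 4 / 8)‖ ≤ 1 := by
  have hre : (-lam * x ^ 4 / 8).re = -(x ^ 4 / 8 * lam.re) := by
    rw [show -lam * x ^ 4 / 8 = ((x ^ 4 / 8 : ℝ) : ℂ) * -lam by push_cast; ring, re_ofReal_mul,
      neg_re, mul_neg]
  rw [norm_exp, Real.exp_le_one_iff, hre, neg_nonpos]
  positivity

theorem integrable_cexp_neg_mul_pow_four {lam : ℂ} (hlam : 0 ≤ lam.re) :
    Integrable (fun x : ℝ => cexp (-lam * x ^ 4 / 8)) (gaussianReal 0 1) :=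
  .of_bound (by fun_prop) 1 (ae_of_all _ (norm_cexp_neg_mul_pow_four_le hlam))

theorem continuousOn_phi4PartitionFunction :
    ContinuousOn phi4PartitionFunction {lam | 0 ≤ lam.re} :=
  continuousOn_of_dominated (fun _ hlam => (integrable_cexp_neg_mul_pow_four hlam).1)
    (fun _ hlam => ae_of_all _ (norm_cexp_neg_mul_pow_four_le hlam)) (integrable_const 1)
    (ae_of_all _ fun _ => by fun_prop)

theorem differentiableOn_phi4PartitionFunction :
    DifferentiableOn ℂ phi4PartitionFunction {lam | 0 < lam.re} := by
  refine differentiableOn_integral_of_deriv_le (μ := gaussianReal 0 1)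
    (F := fun lam (x : ℝ) => cexp (-lam * x ^ 4 / 8))
    (F' := fun lam x => cexp (-lam * x ^ 4 / 8) * (-x ^ 4 / 8)) (bound := fun x => x ^ 4 / 8)
    (isOpen_lt continuous_const continuous_re)
    (fun _ hlam => integrable_cexp_neg_mul_pow_four hlam.le) (fun _ _ => by fun_prop)
    (ae_of_all _ fun x lam hlam => ?_)
    ((integrable_pow_of_mem_interior_integrableExpSet (X := fun x => x) (by simp) 4).div_const 8)
    (ae_of_all _ fun x lam _ => ?_)
  · have hx : ‖(-x ^ 4 / 8 : ℂ)‖ = x ^ 4 / 8 := by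
      rw [show (-x ^ 4 / 8 : ℂ) = ((-x ^ 4 / 8 : ℝ) : ℂ) by push_cast; ring, norm_real,
        Real.norm_eq_abs, abs_div, abs_neg, abs_of_nonneg (by positivity)]
      norm_num
    rw [norm_mul, hx]
    exact mul_le_of_le_one_left (by positivity) (norm_cexp_neg_mul_pow_four_le hlam.le x)
  · simpa using (((hasDerivAt_id lam).neg.mul_const ((x : ℂ) ^ 4)).div_const 8).cexp

end PartitionFunction

section IntermediateField

noncomputable def intermediateFieldIntegral (μ : ℂ) : ℂ :=
  ∫ σ, (1 + I * μ * σ) ^ (-(1 / 2) : ℂ) ∂gaussianReal 0 1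

variable {μ : ℂ}

theorem continuous_one_add_I_mul_cpow (hμ : |μ.im| ≤ μ.re) (s : ℂ) :
    Continuous fun σ : ℝ => (1 + I * μ * σ) ^ s :=
  (by fun_prop : Continuous fun σ : ℝ => 1 + I * μ * σ).cpow continuous_const
    (one_add_I_mul_mem_slitPlane hμ)

theorem norm_one_add_I_mul_cpow_neg_half_le (hμ : |μ.im| ≤ μ.re) (σ : ℝ) :
    ‖(1 + I * μ * σ) ^ (-(1 / 2) : ℂ)‖ ≤ 4 := by
  simpa using norm_one_add_I_mul_cpow_le hμ σ (s := -(1 / 2)) (by norm_num) (by norm_num)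

theorem integrable_one_add_I_mul_cpow_neg_half (hμ : |μ.im| ≤ μ.re) :
    Integrable (fun σ : ℝ => (1 + I * μ * σ) ^ (-(1 / 2) : ℂ)) (gaussianReal 0 1) :=
  .of_bound (continuous_one_add_I_mul_cpow hμ _).aestronglyMeasurable 4
    (ae_of_all _ (norm_one_add_I_mul_cpow_neg_half_le hμ))

theorem continuousOn_intermediateFieldIntegral :
    ContinuousOn intermediateFieldIntegral {μ | |μ.im| ≤ μ.re} :=
  continuousOn_of_dominated (fun _ hμ => (integrable_one_add_I_mul_cpow_neg_half hμ).1)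
    (fun _ hμ => ae_of_all _ (norm_one_add_I_mul_cpow_neg_half_le hμ)) (integrable_const 4)
    (ae_of_all _ fun σ =>
      (by fun_prop : Continuous fun μ : ℂ => 1 + I * μ * σ).continuousOn.cpow_const
        fun _ hμ => one_add_I_mul_mem_slitPlane hμ σ)

theorem differentiableOn_intermediateFieldIntegral :
    DifferentiableOn ℂ intermediateFieldIntegral {μ | |μ.im| < μ.re} := by
  refine differentiableOn_integral_of_deriv_le (μ := gaussianReal 0 1)
    (F := fun μ (σ : ℝ) => (1 + I * μ * σ) ^ (-(1 / 2) : ℂ))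
    (F' := fun μ σ => -(1 / 2) * (1 + I * μ * σ) ^ (-(1 / 2) - 1 : ℂ) * (I * σ))
    (bound := fun σ => 2 * |σ|) isOpen_setOf_abs_im_lt_re
    (fun _ hμ => integrable_one_add_I_mul_cpow_neg_half hμ.le)
    (fun _ hμ => by have := continuous_one_add_I_mul_cpow hμ.le (-(1 / 2) - 1); fun_prop)
    (ae_of_all _ fun σ μ hμ => ?_)
    (((integrable_pow_abs_of_mem_interior_integrableExpSet (X := fun x => x) (by simp)
      1).const_mul 2).congr (by simp))
    (ae_of_all _ fun σ μ hμ => ?_)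
  · have h := norm_one_add_I_mul_cpow_le hμ.le σ (s := -(1 / 2) - 1) (by norm_num) (by norm_num)
    push_cast at h
    rw [norm_mul, norm_mul, norm_mul, norm_I, norm_real, Real.norm_eq_abs]
    norm_num
    nlinarith [abs_nonneg σ]
  · exact (((hasDerivAt_id μ).const_mul I).mul_const (σ : ℂ)).const_add 1 |>.cpow_const
      (one_add_I_mul_mem_slitPlane hμ.le σ) |>.congr_deriv (by simp)

end IntermediateField

theorem phi4PartitionFunction_ofReal_sq (s : ℝ) :
    phi4PartitionFunction ((s : ℂ) ^ 2) = intermediateFieldIntegral s := by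
  have hcharFun (x : ℝ) : cexp (-(s : ℂ) ^ 2 * x ^ 4 / 8) =
      ∫ σ, cexp ((-(s * x ^ 2 / 2) : ℝ) * σ * I) ∂gaussianReal 0 1 := by
    rw [← cexp_neg_sq_div_two_eq_integral_gaussianReal]; push_cast; ring_nf
  have hint : Integrable (Function.uncurry fun x σ : ℝ => cexp ((-(s * x ^ 2 / 2) : ℝ) * σ * I))
      ((gaussianReal 0 1).prod (gaussianReal 0 1)) :=
    .of_bound (by fun_prop) 1 (ae_of_all _ fun p => by
      rw [Function.uncurry_apply_pair, ← ofReal_mul, norm_exp_ofReal_mul_I])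
  have hgauss (σ : ℝ) : ∫ x, cexp ((-(s * x ^ 2 / 2) : ℝ) * σ * I) ∂gaussianReal 0 1 =
      (1 + I * s * σ) ^ (-(1 / 2) : ℂ) := by
    rw [← integral_cexp_neg_mul_sq_div_two_gaussianReal (by simp)]
    congr 1 with x; push_cast; ring_nf
  calc phi4PartitionFunction ((s : ℂ) ^ 2)
      = ∫ x, ∫ σ, cexp ((-(s * x ^ 2 / 2) : ℝ) * σ * I) ∂gaussianReal 0 1 ∂gaussianReal 0 1 := by
        simp_rw [phi4PartitionFunction, ← hcharFun]
    _ = ∫ σ, ∫ x, cexp ((-(s * x ^ 2 / 2) : ℝ) * σ * I) ∂gaussianReal 0 1 ∂gaussianReal 0 1 :=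
        integral_integral_swap hint
    _ = intermediateFieldIntegral s := by simp_rw [hgauss, intermediateFieldIntegral]

theorem phi4PartitionFunction_sq_eqOn :
    EqOn (fun μ => phi4PartitionFunction (μ ^ 2)) intermediateFieldIntegral
      {μ | |μ.im| ≤ μ.re} := by
  have hofReal : Tendsto ((↑) : ℝ → ℂ) (𝓝[≠] 1) (𝓝[≠] 1) := by
    simpa using continuous_ofReal.continuousWithinAt.tendsto_nhdsWithin (x := 1)
      (t := {(1 : ℂ)}ᶜ) fun x hx => by simpa using hx
  have hopen : EqOn (fun μ => phi4PartitionFunction (μ ^ 2)) intermediateFieldIntegral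
      {μ | |μ.im| < μ.re} :=
    AnalyticOnNhd.eqOn_of_preconnected_of_frequently_eq
      ((differentiableOn_phi4PartitionFunction.comp (differentiableOn_pow 2)
        fun _ hμ => re_sq_pos_of_abs_im_lt_re hμ).analyticOnNhd isOpen_setOf_abs_im_lt_re)
      (differentiableOn_intermediateFieldIntegral.analyticOnNhd isOpen_setOf_abs_im_lt_re)
      convex_setOf_abs_im_lt_re.isPreconnected (by simp)
      (hofReal.frequently (Eventually.of_forall phi4PartitionFunction_ofReal_sq).frequently)
  exact hopen.of_subset_closure
    (continuousOn_phi4PartitionFunction.comp (continuous_pow 2).continuousOn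
      fun μ hμ => (abs_im_le_re_iff ((abs_nonneg _).trans hμ)).1 hμ)
    continuousOn_intermediateFieldIntegral (fun _ hμ => hμ.out.le)
    setOf_abs_im_le_re_subset_closure

/-- **Intermediate-field representation of the zero-dimensional φ⁴ partition function.**
For `Re λ ≥ 0`, `Z(λ) = ∫ e^{−λx⁴/8} dν(x) = ∫ (1 + i√λ σ)^{−1/2} dν(σ)`, both integrals
converging absolutely; `√λ` and `(·)^{−1/2}` denote principal branches (`Complex.cpow`). -/
theorem intermediate_field_partition_function (lam : ℂ) (hlam : 0 ≤ lam.re) :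
    Integrable (fun x : ℝ => Complex.exp (-lam * (x : ℂ) ^ 4 / 8)) gaussianNu ∧
    Integrable (fun σ : ℝ =>
      (1 + Complex.I * lam ^ (1 / 2 : ℂ) * (σ : ℂ)) ^ (-(1 / 2) : ℂ)) gaussianNu ∧
    (∫ x : ℝ, Complex.exp (-lam * (x : ℂ) ^ 4 / 8) ∂gaussianNu) =
      ∫ σ : ℝ, (1 + Complex.I * lam ^ (1 / 2 : ℂ) * (σ : ℂ)) ^ (-(1 / 2) : ℂ) ∂gaussianNu := by
  have hsector : |(lam ^ (1 / 2 : ℂ)).im| ≤ (lam ^ (1 / 2 : ℂ)).re :=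
    (abs_im_le_re_iff (re_cpow_one_div_two_nonneg lam)).2 (by rwa [cpow_one_div_two_sq])
  rw [gaussianNu_eq_gaussianReal]
  refine ⟨integrable_cexp_neg_mul_pow_four hlam, integrable_one_add_I_mul_cpow_neg_half hsector, ?_⟩
  simpa only [phi4PartitionFunction, intermediateFieldIntegral, cpow_one_div_two_sq]
    using phi4PartitionFunction_sq_eqOn hsector
end

section
/- Let Σ be an n × n Hermitian complex matrix and let λ ∈ ℂ with Re λ ≥ 0. Then the matrix 1 + i·√λ·Σ is invertible, and its inverse satisfies the operator-norm bound ‖(1 + i·√λ·Σ)^{−1}‖ ≤ √2, where ‖·‖ denotes the operator norm induced by the Euclidean (ℓ²) norm on ℂⁿ. (Resolvent bound for Hermitian matrices.) -/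
/-!
The principal root `w = √λ` of a `λ` with `Re λ ≥ 0` lies in the sector `|Im w| ≤ Re w`.
For Hermitian `Σ` the number `⟨x, (1 + i w Σ) x⟩ = ‖x‖² + i w t` has real `t = ⟨x, Σ x⟩`,
and in that sector it has modulus at least `‖x‖² / √2`. Cauchy–Schwarz then gives
`‖x‖ ≤ √2 ‖(1 + i w Σ) x‖`, i.e. `1 + i w Σ` is injective, hence invertible, with inverse
of norm at most `√2`.
-/

open Complex

theorem Complex.abs_im_cpow_half_le_re {z : ℂ} (hz : 0 ≤ z.re) :
    |(z ^ (1 / 2 : ℂ)).im| ≤ (z ^ (1 / 2 : ℂ)).re := by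
  rw [one_div, abs_cpow_inv_two_im, cpow_inv_two_re]
  gcongr
  linarith

/-- The factor `2` is attained at `w = 1 + I`, `c = 2`, `t = 1`. -/
theorem Complex.sq_le_two_mul_normSq_add_I_mul {w : ℂ} (hw : |w.im| ≤ w.re) (c t : ℝ) :
    c ^ 2 ≤ 2 * normSq (c + I * w * t) := by
  have hsq : w.im ^ 2 ≤ w.re ^ 2 := sq_le_sq' (abs_le.mp hw).1 (abs_le.mp hw).2
  have hnorm : normSq (c + I * w * t) = (c - w.im * t) ^ 2 + (w.re * t) ^ 2 := by
    simp only [normSq_apply, add_re, add_im, mul_re, mul_im, ofReal_re, ofReal_im, I_re, I_im]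
    ring
  rw [hnorm]
  nlinarith [sq_nonneg (c - 2 * w.im * t), mul_nonneg (sub_nonneg.mpr hsq) (sq_nonneg t)]

theorem LinearMap.IsSymmetric.norm_le_sqrt_two_mul_norm_add_I_mul_smul
    {E : Type*} [NormedAddCommGroup E] [InnerProductSpace ℂ E] {T : E →ₗ[ℂ] E}
    (hT : T.IsSymmetric) {w : ℂ} (hw : |w.im| ≤ w.re) (x : E) :
    ‖x‖ ≤ √2 * ‖x + (I * w) • T x‖ := by
  set t : ℝ := (inner ℂ (T x) x).re
  have ht : (t : ℂ) = inner ℂ x (T x) := (hT.coe_re_inner_apply_self x).trans (hT x x)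
  have hinner : inner ℂ x (x + (I * w) • T x) = ((‖x‖ ^ 2 : ℝ) : ℂ) + I * w * t := by
    rw [inner_add_right, inner_smul_right, inner_self_eq_norm_sq_to_K, ht, ofReal_pow]
    rfl
  have hsq : (‖x‖ ^ 2) ^ 2 ≤ (√2 * ‖inner ℂ x (x + (I * w) • T x)‖) ^ 2 := by
    rw [mul_pow, Real.sq_sqrt zero_le_two, hinner, Complex.sq_norm]
    exact sq_le_two_mul_normSq_add_I_mul hw _ _
  rcases (norm_nonneg x).eq_or_lt with hx | hx
  · rw [← hx]; positivity
  refine le_of_mul_le_mul_left ?_ hx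
  calc ‖x‖ * ‖x‖ = ‖x‖ ^ 2 := (sq _).symm
    _ ≤ √2 * ‖inner ℂ x (x + (I * w) • T x)‖ := (abs_le_of_sq_le_sq' hsq (by positivity)).2
    _ ≤ √2 * (‖x‖ * ‖x + (I * w) • T x‖) := by gcongr; exact norm_inner_le_norm _ _
    _ = ‖x‖ * (√2 * ‖x + (I * w) • T x‖) := by ring

theorem Matrix.isUnit_and_norm_toEuclideanCLM_inv_le {𝕜 n : Type*} [RCLike 𝕜] [Fintype n]
    [DecidableEq n] {A : Matrix n n 𝕜} {C : ℝ} (hC : 0 ≤ C)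
    (h : ∀ x, ‖x‖ ≤ C * ‖toEuclideanCLM (𝕜 := 𝕜) A x‖) :
    IsUnit A ∧ ‖toEuclideanCLM (𝕜 := 𝕜) A⁻¹‖ ≤ C := by
  have hA : IsUnit A := by
    refine mulVec_injective_iff_isUnit.mp fun u v huv => ?_
    simpa [mulVec_sub, huv, sub_eq_zero] using h (WithLp.toLp 2 (u - v))
  refine ⟨hA, ContinuousLinearMap.opNorm_le_bound _ hC fun y => ?_⟩
  have hinv : toEuclideanCLM (𝕜 := 𝕜) A (toEuclideanCLM (𝕜 := 𝕜) A⁻¹ y) = y := by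
    change (toEuclideanCLM (𝕜 := 𝕜) A * toEuclideanCLM (𝕜 := 𝕜) A⁻¹) y = y
    rw [← map_mul, mul_nonsing_inv _ ((isUnit_iff_isUnit_det A).mp hA), map_one]
    rfl
  simpa [hinv] using h (toEuclideanCLM (𝕜 := 𝕜) A⁻¹ y)

/-- **Resolvent bound for Hermitian matrices.**  Let `Σ` be an `n × n` Hermitian complex
matrix and `λ ∈ ℂ` with `Re λ ≥ 0`.  Then `1 + i√λ·Σ` is invertible, and its inverse has
operator norm (induced by the Euclidean norm on `ℂⁿ`) at most `√2`.  Here `√λ` denotes the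
principal branch of the complex square root, and the operator norm is realised through
`Matrix.toEuclideanCLM`, the action of a matrix on `EuclideanSpace ℂ (Fin n)`. -/
theorem hermitian_resolvent_bound (n : ℕ) (lam : ℂ) (hlam : 0 ≤ lam.re)
    (S : Matrix (Fin n) (Fin n) ℂ) (hS : S.IsHermitian) :
    IsUnit (1 + (Complex.I * lam ^ (1 / 2 : ℂ)) • S) ∧
    ‖Matrix.toEuclideanCLM (𝕜 := ℂ) (n := Fin n)
        ((1 + (Complex.I * lam ^ (1 / 2 : ℂ)) • S)⁻¹)‖ ≤ Real.sqrt 2 := by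
  have hS' := (hS.isSelfAdjoint.map (Matrix.toEuclideanCLM (𝕜 := ℂ) (n := Fin n))).isSymmetric
  refine Matrix.isUnit_and_norm_toEuclideanCLM_inv_le (Real.sqrt_nonneg 2) fun x => ?_
  simpa using hS'.norm_le_sqrt_two_mul_norm_add_I_mul_smul (abs_im_cpow_half_le_re hlam) x
end

section
/- Let λ ∈ ℂ with Re λ ≥ 0 and λ ≠ 0, and define V_λ : ℝ → ℂ by V_λ(σ) = −(1/2)·Log(1 + i·√λ·σ), where Log is the principal complex logarithm. Then V_λ is infinitely differentiable on ℝ and for every integer k ≥ 1 and every σ ∈ ℝ, |V_λ^{(k)}(σ)| = (1/2)·(k−1)!·|λ|^{k/2}·|1 + i·√λ·σ|^{−k} ≤ 2^{k/2}·(k−1)!·|λ|^{k/2}. (Derivative bounds on the loop vertex.) -/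
open Complex


/-- **Derivative bounds on the loop vertex.**  For `λ ≠ 0` with `Re λ ≥ 0`, the loop vertex
`V_λ(σ) = −(1/2) Log(1 + i√λ σ)` is a smooth function of the real variable `σ`, and for
every `k ≥ 1` and `σ ∈ ℝ`,
`|V_λ^{(k)}(σ)| = (1/2)(k−1)! |λ|^{k/2} |1 + i√λ σ|^{−k} ≤ 2^{k/2}(k−1)! |λ|^{k/2}`.
Here `√λ` is the principal square root (`cpow`), `Log` the principal logarithm, and
`V_λ^{(k)}` is `iteratedDeriv k V_λ`; real exponents are interpreted via `Real.rpow`. -/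
theorem loop_vertex_derivative_bounds (lam : ℂ) (hre : 0 ≤ lam.re) (hne : lam ≠ 0) :
    ContDiff ℝ (⊤ : ℕ∞) (fun σ : ℝ =>
      -(1 / 2 : ℂ) * Complex.log (1 + Complex.I * lam ^ (1 / 2 : ℂ) * (σ : ℂ))) ∧
    ∀ k : ℕ, 1 ≤ k → ∀ σ : ℝ,
      ‖iteratedDeriv k
          (fun σ : ℝ =>
            -(1 / 2 : ℂ) * Complex.log (1 + Complex.I * lam ^ (1 / 2 : ℂ) * (σ : ℂ))) σ‖
        = (1 / 2) * (k - 1).factorial * ‖lam‖ ^ ((k : ℝ) / 2) *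
            ‖1 + Complex.I * lam ^ (1 / 2 : ℂ) * (σ : ℂ)‖ ^ (-(k : ℝ)) ∧
      ‖iteratedDeriv k
          (fun σ : ℝ =>
            -(1 / 2 : ℂ) * Complex.log (1 + Complex.I * lam ^ (1 / 2 : ℂ) * (σ : ℂ))) σ‖
        ≤ 2 ^ ((k : ℝ) / 2) * (k - 1).factorial * ‖lam‖ ^ ((k : ℝ) / 2) := by
  set s : ℂ := lam ^ (1 / 2 : ℂ) with hs
  -- basic facts about s
  have hs0 : s ≠ 0 := by
    rw [hs, Ne, cpow_eq_zero_iff]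
    rintro ⟨rfl, -⟩; exact hne rfl
  have hsq : s ^ 2 = lam := by
    have : ((2 : ℕ)⁻¹ : ℂ) = (1 / 2 : ℂ) := by norm_num
    rw [hs, ← this, Complex.cpow_nat_inv_pow lam two_ne_zero]
  -- Re s ≥ 0
  have hre_s : 0 ≤ s.re := by
    rw [hs, Complex.cpow_def_of_ne_zero hne]
    rw [Complex.exp_re]
    apply mul_nonneg (Real.exp_pos _).le
    apply Real.cos_nonneg_of_mem_Icc
    have h1 := Complex.neg_pi_lt_arg lam
    have h2 := Complex.arg_le_pi lam
    have him : (Complex.log lam * (1 / 2 : ℂ)).im = lam.arg / 2 := by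
      have h12 : (1 / 2 : ℂ) = ((1 / 2 : ℝ) : ℂ) := by norm_num
      rw [h12, Complex.mul_im]
      simp [Complex.log_im]
      ring
    rw [him]
    constructor <;> [linarith; linarith]
  set a : ℝ := s.re
  set b : ℝ := s.im
  have hab : b ^ 2 ≤ a ^ 2 := by
    have h2 : (s ^ 2).re = a ^ 2 - b ^ 2 := by
      rw [pow_two, Complex.mul_re]; ring
    rw [hsq] at h2
    nlinarith
  have ha : 0 < a := by
    rcases lt_or_eq_of_le hre_s with h | h
    · exact h
    · exfalso
      have hb : b = 0 := by nlinarith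
      refine hs0 (Complex.ext ?_ ?_)
      · simpa using h.symm
      · simpa using hb
  have habs_s : ‖s‖ = ‖lam‖ ^ (1 / 2 : ℝ) := by
    have : (1 / 2 : ℂ) = ((1 / 2 : ℝ) : ℂ) := by norm_num
    rw [hs, this, Complex.norm_cpow_real]
  -- the function w
  set c : ℂ := Complex.I * s with hc
  set w : ℝ → ℂ := fun σ : ℝ => 1 + c * (σ : ℂ) with hw
  have hwre : ∀ σ : ℝ, (w σ).re = 1 - b * σ := by
    intro σ; simp [hw, hc, Complex.add_re, Complex.mul_re]; ring
  have hwim : ∀ σ : ℝ, (w σ).im = a * σ := by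
    intro σ; simp [hw, hc, Complex.add_im, Complex.mul_im]; exact Or.inl rfl
  have hwabs_sq : ∀ σ : ℝ, (1 / 2 : ℝ) ≤ ‖w σ‖ ^ 2 := by
    intro σ
    rw [Complex.sq_norm, Complex.normSq_apply, hwre, hwim]
    nlinarith [sq_nonneg (b * σ - 1 / 2), sq_nonneg σ]
  have hwabs : ∀ σ : ℝ, (2 : ℝ) ^ (-(1 / 2) : ℝ) ≤ ‖w σ‖ := by
    intro σ
    have h1 : ((2 : ℝ) ^ (-(1 / 2) : ℝ)) ^ 2 ≤ ‖w σ‖ ^ 2 := by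
      rw [← Real.rpow_natCast ((2:ℝ) ^ (-(1/2):ℝ)) 2, ← Real.rpow_mul (by norm_num)]
      norm_num
      exact hwabs_sq σ
    have h2 : (0 : ℝ) ≤ (2 : ℝ) ^ (-(1 / 2) : ℝ) := (Real.rpow_pos_of_pos two_pos _).le
    nlinarith [norm_nonneg (w σ)]
  have hw0 : ∀ σ : ℝ, w σ ≠ 0 := by
    intro σ h
    have := hwabs_sq σ
    rw [h] at this; simp at this; linarith
  have hslit : ∀ σ : ℝ, w σ ∈ Complex.slitPlane := by
    intro σ
    rcases eq_or_ne σ 0 with rfl | hσ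
    · left; rw [hwre]; norm_num
    · right; rw [hwim]; exact mul_ne_zero (ne_of_gt ha) hσ
  -- derivative of w
  have hwderiv : ∀ σ : ℝ, HasDerivAt w c σ := by
    intro σ
    have h1 : HasDerivAt (fun σ : ℝ => (σ : ℂ)) 1 σ := by
      simpa using (hasDerivAt_id σ).ofReal_comp
    simpa [hw] using ((h1.const_mul c).const_add 1)
  set f : ℝ → ℂ := fun σ : ℝ => -(1 / 2 : ℂ) * Complex.log (w σ) with hf
  -- smoothness
  have hwsmooth : ContDiff ℝ (⊤ : ℕ∞) w := by
    exact contDiff_const.add (contDiff_const.mul Complex.ofRealCLM.contDiff)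
  have hsmooth : ContDiff ℝ (⊤ : ℕ∞) f := by
    apply ContDiff.mul contDiff_const
    rw [contDiff_iff_contDiffAt]
    intro σ
    exact ((Complex.contDiffAt_log (hslit σ)).restrict_scalars ℝ).comp σ hwsmooth.contDiffAt
  -- iterated derivative formula
  have hiter : ∀ k : ℕ, iteratedDeriv (k + 1) f =
      fun σ : ℝ => -(1 / 2 : ℂ) * ((-1) ^ k * (k.factorial : ℂ) * c ^ (k + 1) *
        (w σ) ^ (-(k + 1) : ℤ)) := by
    intro k
    induction k with
    | zero =>
      rw [iteratedDeriv_one]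
      funext σ
      have h1 : HasDerivAt f (-(1 / 2 : ℂ) * (c / w σ)) σ :=
        ((hwderiv σ).clog_real (hslit σ)).const_mul (-(1 / 2 : ℂ))
      rw [h1.deriv]
      field_simp
      simp [div_eq_mul_inv]
    | succ k ih =>
      rw [iteratedDeriv_succ, ih]
      funext σ
      have hz : HasDerivAt (fun σ : ℝ => (w σ) ^ (-(k + 1) : ℤ))
          ((-(k + 1) : ℤ) * (w σ) ^ ((-(k + 1) : ℤ) - 1) * c) σ :=
        (hasDerivAt_zpow (-(k + 1) : ℤ) (w σ) (Or.inl (hw0 σ))).comp σ (hwderiv σ)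
      have h1 : HasDerivAt (fun σ : ℝ => -(1 / 2 : ℂ) * ((-1) ^ k * (k.factorial : ℂ) *
          c ^ (k + 1) * (w σ) ^ (-(k + 1) : ℤ)))
          (-(1 / 2 : ℂ) * ((-1) ^ k * (k.factorial : ℂ) * c ^ (k + 1) *
            ((-(k + 1) : ℤ) * (w σ) ^ ((-(k + 1) : ℤ) - 1) * c))) σ := by
        exact (hz.const_mul _).const_mul _
      rw [h1.deriv]
      have he : ((-(k + 1) : ℤ) - 1) = (-(k + 2) : ℤ) := by ring
      rw [he]
      have hfac : ((k + 1).factorial : ℂ) = (k + 1) * (k.factorial : ℂ) := by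
        push_cast [Nat.factorial_succ]; ring
      have : (-((k : ℤ) + 1 + 1)) = (-(k + 2) : ℤ) := by ring
      push_cast [hfac]
      ring
  refine ⟨hsmooth, ?_⟩
  intro k hk σ
  obtain ⟨m, rfl⟩ : ∃ m : ℕ, k = m + 1 := ⟨k - 1, (Nat.succ_pred_eq_of_pos hk).symm⟩
  have hformula := congrFun (hiter m) σ
  have habs_c : ‖c‖ = ‖lam‖ ^ (1 / 2 : ℝ) := by
    rw [hc, norm_mul, Complex.norm_I, one_mul, habs_s]
  have hck : ‖c‖ ^ (m + 1) = ‖lam‖ ^ (((m + 1 : ℕ) : ℝ) / 2) := by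
    rw [habs_c, ← Real.rpow_natCast (‖lam‖ ^ (1/2:ℝ)) (m+1),
      ← Real.rpow_mul (norm_nonneg lam)]
    norm_num
    ring_nf
  have hwk : ‖(w σ) ^ (-(m + 1) : ℤ)‖ =
      ‖w σ‖ ^ (-((m + 1 : ℕ) : ℝ)) := by
    rw [norm_zpow, ← Real.rpow_intCast (‖w σ‖) (-(m+1) : ℤ)]
    norm_num
  have habs_f : ‖iteratedDeriv (m + 1) f σ‖ =
      (1 / 2) * (m.factorial : ℝ) * ‖lam‖ ^ (((m + 1 : ℕ) : ℝ) / 2) *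
        ‖w σ‖ ^ (-((m + 1 : ℕ) : ℝ)) := by
    rw [hformula, norm_mul, norm_mul, norm_mul, norm_mul, norm_pow, norm_pow, hck, hwk]
    simp [Complex.norm_natCast]
    ring
  have hmem : (m + 1 : ℕ) - 1 = m := by simp
  constructor
  · rw [hmem]
    exact habs_f
  · have hWbound : ‖w σ‖ ^ (-((m + 1 : ℕ) : ℝ)) ≤
        2 ^ (((m + 1 : ℕ) : ℝ) / 2) := by
      have h1 : ‖w σ‖ ^ (-((m + 1 : ℕ) : ℝ)) ≤
          ((2 : ℝ) ^ (-(1 / 2) : ℝ)) ^ (-((m + 1 : ℕ) : ℝ)) :=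
        Real.rpow_le_rpow_of_nonpos (Real.rpow_pos_of_pos two_pos _) (hwabs σ)
          (neg_nonpos.mpr (by positivity))
      have h2 : ((2 : ℝ) ^ (-(1 / 2) : ℝ)) ^ (-((m + 1 : ℕ) : ℝ)) =
          2 ^ (((m + 1 : ℕ) : ℝ) / 2) := by
        rw [← Real.rpow_mul (by norm_num)]
        ring_nf
      rw [h2] at h1; exact h1
    rw [habs_f, hmem]
    have hnn1 : (0:ℝ) ≤ (m.factorial : ℝ) := Nat.cast_nonneg _
    have hnn2 : (0:ℝ) ≤ ‖lam‖ ^ (((m + 1 : ℕ) : ℝ) / 2) :=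
      Real.rpow_nonneg (norm_nonneg lam) _
    have hnn3 : (0:ℝ) ≤ ‖w σ‖ ^ (-((m + 1 : ℕ) : ℝ)) :=
      Real.rpow_nonneg (norm_nonneg _) _
    nlinarith [mul_le_mul_of_nonneg_left hWbound (mul_nonneg hnn1 hnn2),
      mul_nonneg (mul_nonneg hnn1 hnn2) hnn3]
end

section
/- Let H be an n × n real matrix with n ≥ 1. Then the operator norm of H (with respect to the Euclidean norm on ℝⁿ) is given by ‖H‖ = lim_{k→∞} ( trace( (H·Hᵀ)^k ) )^{1/(2k)}, where Hᵀ is the transpose of H; in particular the limit on the right-hand side exists. -/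
/-!
Write `A = H Hᵀ`: it is positive semidefinite with eigenvalues `λᵢ ≥ 0`, and by the C*-identity
and the spectral theorem `‖H‖² = ‖A‖ = maxᵢ λᵢ`. Since `trace (A ^ k) = ∑ᵢ λᵢ ^ k` lies between
`(max λ) ^ k` and `n (max λ) ^ k`, its `k`-th root tends to `max λ`; take square roots.
-/

open Filter

/-- The operator norm of a square real matrix, induced by the Euclidean (ℓ²) norm on `ℝⁿ`,
realised through the action of the matrix on `EuclideanSpace ℝ (Fin n)`. -/
noncomputable def euclideanOpNorm (n : ℕ) (H : Matrix (Fin n) (Fin n) ℝ) : ℝ :=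
  ‖Matrix.toEuclideanCLM (𝕜 := ℝ) (n := Fin n) H‖

open Topology
open scoped Matrix.Norms.L2Operator

theorem tendsto_sum_pow_rpow_inv_natCast_norm {ι : Type*} [Fintype ι] [Nonempty ι] {f : ι → ℝ}
    (hf : 0 ≤ f) : Tendsto (fun k : ℕ => (∑ i, f i ^ k) ^ (k : ℝ)⁻¹) atTop (𝓝 ‖f‖) := by
  have hcard : Tendsto (fun k : ℕ => (Fintype.card ι : ℝ) ^ (k : ℝ)⁻¹ * ‖f‖) atTop (𝓝 ‖f‖) := by
    have hinv : Tendsto (fun k : ℕ => (k : ℝ)⁻¹) atTop (𝓝 0) :=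
      tendsto_inv_atTop_zero.comp tendsto_natCast_atTop_atTop
    simpa using (tendsto_const_nhds.rpow hinv
      (Or.inl (Nat.cast_ne_zero.2 Fintype.card_ne_zero))).mul_const ‖f‖
  have hsum_nonneg (k : ℕ) : 0 ≤ ∑ i, f i ^ k := Finset.sum_nonneg fun i _ => pow_nonneg (hf i) k
  refine tendsto_of_tendsto_of_tendsto_of_le_of_le' tendsto_const_nhds hcard ?_ ?_
  · filter_upwards [eventually_ne_atTop 0] with k hk
    refine (pi_norm_le_iff_of_nonneg (Real.rpow_nonneg (hsum_nonneg k) _)).2 fun i => ?_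
    calc ‖f i‖ = (f i ^ k) ^ (k : ℝ)⁻¹ := by
          rw [Real.norm_of_nonneg (hf i), Real.pow_rpow_inv_natCast (hf i) hk]
      _ ≤ _ := Real.rpow_le_rpow (pow_nonneg (hf i) k)
          (Finset.single_le_sum (fun j _ => pow_nonneg (hf j) k) (Finset.mem_univ i))
          (by positivity)
  · filter_upwards [eventually_ne_atTop 0] with k hk
    have hsum : ∑ i, f i ^ k ≤ Fintype.card ι * ‖f‖ ^ k := by
      calc ∑ i, f i ^ k ≤ ∑ _i : ι, ‖f‖ ^ k := Finset.sum_le_sum fun i _ =>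
            pow_le_pow_left₀ (hf i) ((le_abs_self _).trans (norm_le_pi_norm f i)) k
        _ = _ := by simp
    calc _ ≤ (Fintype.card ι * ‖f‖ ^ k) ^ (k : ℝ)⁻¹ :=
          Real.rpow_le_rpow (hsum_nonneg k) hsum (by positivity)
      _ = _ := by
          rw [Real.mul_rpow (by positivity) (by positivity),
            Real.pow_rpow_inv_natCast (norm_nonneg _) hk]

namespace Matrix

open scoped ComplexOrder

variable {𝕜 : Type*} [RCLike 𝕜] {n : Type*} [Fintype n] [DecidableEq n] {A : Matrix n n 𝕜}

lemma IsHermitian.trace_pow (hA : A.IsHermitian) (k : ℕ) :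
    (A ^ k).trace = ∑ i, (hA.eigenvalues i : 𝕜) ^ k := by
  conv_lhs => rw [hA.spectral_theorem, ← map_pow, diagonal_pow, Unitary.conjStarAlgAut_apply,
    trace_mul_cycle, Unitary.coe_star_mul_self, one_mul, trace_diagonal]
  rfl

lemma IsHermitian.l2_opNorm_eq_norm_eigenvalues (hA : A.IsHermitian) :
    ‖A‖ = ‖hA.eigenvalues‖ := by
  conv_lhs => rw [hA.spectral_theorem]
  rw [Unitary.conjStarAlgAut_apply, ← Unitary.coe_star, CStarRing.norm_mul_coe_unitary,
    CStarRing.norm_coe_unitary_mul, l2_opNorm_diagonal]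
  exact (algebraMap_isometry ℝ 𝕜).postcomp_pi.norm_map_of_map_zero (by ext; simp) _

lemma PosSemidef.tendsto_re_trace_pow_rpow_inv [Nonempty n] (hA : A.PosSemidef) :
    Tendsto (fun k : ℕ => RCLike.re (A ^ k).trace ^ (k : ℝ)⁻¹) atTop (𝓝 ‖A‖) := by
  simp_rw [hA.isHermitian.l2_opNorm_eq_norm_eigenvalues, hA.isHermitian.trace_pow, map_sum,
    ← RCLike.ofReal_pow, RCLike.ofReal_re]
  exact tendsto_sum_pow_rpow_inv_natCast_norm hA.eigenvalues_nonneg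

end Matrix

/-- For an `n × n` real matrix `H` (`n ≥ 1`), the Euclidean operator norm is recovered as
`‖H‖ = lim_{k→∞} (trace((H·Hᵀ)^k))^{1/(2k)}`; in particular the limit exists.  The real
exponent `1/(2k)` is interpreted via `Real.rpow`. -/
theorem opNorm_eq_lim_trace_pow (n : ℕ) (hn : 1 ≤ n) (H : Matrix (Fin n) (Fin n) ℝ) :
    Tendsto (fun k : ℕ => Matrix.trace ((H * H.transpose) ^ k) ^ (1 / (2 * (k : ℝ))))
      atTop (nhds (euclideanOpNorm n H)) := by
  have : Nonempty (Fin n) := ⟨⟨0, hn⟩⟩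
  rw [euclideanOpNorm, Matrix.l2_opNorm_toEuclideanCLM]
  have hA : (H * H.transpose).PosSemidef := by
    simpa using Matrix.posSemidef_self_mul_conjTranspose H
  have hnorm : ‖H * H.transpose‖ = ‖H‖ ^ 2 := by
    simpa [sq, Matrix.star_eq_conjTranspose] using CStarRing.norm_self_mul_star (x := H)
  have hlim := hA.tendsto_re_trace_pow_rpow_inv.sqrt
  rw [hnorm, Real.sqrt_sq (norm_nonneg _)] at hlim
  refine hlim.congr fun k => ?_
  rw [RCLike.re_to_real, Real.sqrt_eq_rpow, ← Real.rpow_mul (hA.pow k).trace_nonneg]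
  ring_nf
end
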